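/- Let F be a Bedford–McMullen carpet. Then the limit lim_{r→0⁺} log N_r(F)/(−log r) exists and equals log M/log m + log(N/M)/log n; that is, the box dimension of F is dim_B F = log M/log m + log(N/M)/log n. -/

import Mathlib

open Set Filter MeasureTheory
open scoped ENNReal NNReal

noncomputable section

/-- The affine contraction for digit `d = (a, b)` in the `m × n` grid:
`(x, y) ↦ ((x + a)/m, (y + b)/n)`. -/
def bmMap (m n : ℕ) (d : ℕ × ℕ) : ℝ × ℝ → ℝ × ℝ :=
  fun p => ((p.1 + d.1) / m, (p.2 + d.2) / n)

/-- `F` is the Bedford–McMullen carpet with grid `m × n` and digit set `D`. -/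
structure IsBMCarpet (m n : ℕ) (D : Finset (ℕ × ℕ)) (F : Set (ℝ × ℝ)) : Prop where
  one_lt_m : 1 < m
  m_lt_n : m < n
  D_nonempty : D.Nonempty
  D_sub : ∀ d ∈ D, d.1 < m ∧ d.2 < n
  F_nonempty : F.Nonempty
  F_compact : IsCompact F
  self_affine : F = ⋃ d ∈ D, bmMap m n d '' F

/-- The set of nonempty columns. -/
def cols (D : Finset (ℕ × ℕ)) : Finset ℕ := D.image Prod.fst

/-- The number of chosen rectangles in column `a`. -/
def colCount (D : Finset (ℕ × ℕ)) (a : ℕ) : ℕ := (D.filter fun d => d.1 = a).card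

/-- The carpet has uniform fibres: every nonempty column contains `N/M` rectangles. -/
def UniformFibres (D : Finset (ℕ × ℕ)) : Prop :=
  ∀ a ∈ cols D, (cols D).card * colCount D a = D.card

/-- Smallest number of sets of diameter at most `r` needed to cover `E`. -/
def coverNumber (E : Set (ℝ × ℝ)) (r : ℝ) : ℕ :=
  sInf {k : ℕ | ∃ U : Fin k → Set (ℝ × ℝ),
    (∀ i, EMetric.diam (U i) ≤ ENNReal.ofReal r) ∧ E ⊆ ⋃ i, U i}

/-- The upper box dimension, `limsup_{r → 0⁺} log N_r(E) / (-log r)`. -/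
def upperBoxDim (E : Set (ℝ × ℝ)) : ℝ :=
  limsup (fun r : ℝ => Real.log (coverNumber E r) / (-Real.log r)) (nhdsWithin 0 (Set.Ioi 0))

/-- The Assouad dimension. -/
def assouadDim (E : Set (ℝ × ℝ)) : ℝ :=
  sInf {s : ℝ | 0 ≤ s ∧ ∃ C > 0, ∀ x ∈ E, ∀ r R : ℝ, 0 < r → r < R →
    (coverNumber (Metric.ball x R ∩ E) r : ℝ) ≤ C * (R / r) ^ s}

/-- The lower dimension. -/
def lowerDim (E : Set (ℝ × ℝ)) : ℝ :=
  sSup {s : ℝ | 0 ≤ s ∧ ∃ C > 0, ∀ x ∈ E, ∀ r R : ℝ, 0 < r → r < R → R ≤ Metric.diam E →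
    C * (R / r) ^ s ≤ (coverNumber (Metric.ball x R ∩ E) r : ℝ)}

/-- The Assouad spectrum with parameter `θ ∈ (0,1)`. -/
def assouadSpectrum (θ : ℝ) (E : Set (ℝ × ℝ)) : ℝ :=
  sInf {s : ℝ | 0 ≤ s ∧ ∃ C > 0, ∀ x ∈ E, ∀ R : ℝ, 0 < R → R < 1 →
    (coverNumber (Metric.ball x R ∩ E) (R ^ (1 / θ)) : ℝ) ≤ C * (R / R ^ (1 / θ)) ^ s}

/-- The lower spectrum with parameter `θ ∈ (0,1)`. -/
def lowerSpectrum (θ : ℝ) (E : Set (ℝ × ℝ)) : ℝ :=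
  sSup {s : ℝ | 0 ≤ s ∧ ∃ C > 0, ∀ x ∈ E, ∀ R : ℝ, 0 < R → R < 1 →
    C * (R / R ^ (1 / θ)) ^ s ≤ (coverNumber (Metric.ball x R ∩ E) (R ^ (1 / θ)) : ℝ)}

/-- The θ-intermediate dimension: infimum of `s ≥ 0` such that for every `ε > 0` there is
`δ₀ > 0` so that for every `0 < δ ≤ δ₀` there is a countable cover `{U_i}` of `E` with
`δ^{1/θ} ≤ |U_i| ≤ δ` and `Σ_i |U_i|^s ≤ ε`. -/
def interDim (θ : ℝ) (E : Set (ℝ × ℝ)) : ℝ :=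
  sInf {s : ℝ | 0 ≤ s ∧ ∀ ε : ℝ, 0 < ε → ∃ δ₀ > 0, ∀ δ : ℝ, 0 < δ → δ ≤ δ₀ →
    ∃ (ι : Type) (_ : Countable ι) (U : ι → Set (ℝ × ℝ)),
      (E ⊆ ⋃ i, U i) ∧
      (∀ i, ENNReal.ofReal (δ ^ (1 / θ)) ≤ EMetric.diam (U i) ∧
        EMetric.diam (U i) ≤ ENNReal.ofReal δ) ∧
      (∑' i, EMetric.diam (U i) ^ s) ≤ ENNReal.ofReal ε}

/-- A measure is exact dimensional with dimension `α` if the local dimension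
`log ν(B(x,r)) / log r` tends to `α` as `r → 0⁺`, for `ν`-a.e. `x`. -/
def ExactDimensional (μ : Measure (ℝ × ℝ)) (α : ℝ) : Prop :=
  ∀ᵐ x ∂μ, Tendsto (fun r : ℝ => Real.log (μ (Metric.ball x r)).toReal / Real.log r)
    (nhdsWithin 0 (Set.Ioi 0)) (nhds α)

/-- The Hausdorff dimension of a measure: the infimum of `dimH A` over Borel sets of full
measure. -/
def measureDimH {X : Type*} [EMetricSpace X] [MeasurableSpace X] (ν : Measure X) : ℝ≥0∞ :=
  ⨅ (A : Set X) (_ : MeasurableSet A) (_ : ν A = 1), dimH A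

/-- The generalized Hausdorff measure associated to the gauge function `h`. -/
def gaugeMeasure (h : ℝ → ℝ) : Measure (ℝ × ℝ) :=
  MeasureTheory.Measure.mkMetric (fun r : ℝ≥0∞ => ENNReal.ofReal (h r.toReal))

/-!
At scale `n⁻ˡ` let `k` be the least integer with `nˡ ≤ mᵏ`. The approximate squares are the cells
of the `m⁻ᵏ × n⁻ˡ` grid selected by `l` digits of `D` followed by `k - l` column digits; there are
`Nˡ Mᵏ⁻ˡ` of them. They cover `F`, each of them meets `F`, and a set of diameter `n⁻ˡ` meets at
most a bounded number of them, so `N_{n⁻ˡ}(F)` is `Nˡ Mᵏ⁻ˡ` up to a constant factor. Since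
`k / l → log n / log m`, along the scales `r = n⁻ˡ` this gives
`log N_r(F) / -log r → (log N + (log n / log m - 1) log M) / log n`,
and monotonicity of `N_r` in `r` fills in the scales in between.
-/

theorem Nat.pow_clog_le_mul {b x : ℕ} (hb : 0 < b) (hx : 0 < x) : b ^ Nat.clog b x ≤ b * x := by
  rcases h : Nat.clog b x with _ | k
  · simpa using Nat.mul_le_mul hb hx
  · rw [pow_succ']
    exact Nat.mul_le_mul_left b (Nat.pow_lt_of_lt_clog (h ▸ Nat.lt_succ_self k)).le

theorem Real.pow_floor_logb_le_and_lt_pow_succ {b x : ℝ} (hb : 1 < b) (hx : 1 ≤ x) :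
    b ^ ⌊Real.logb b x⌋₊ ≤ x ∧ x < b ^ (⌊Real.logb b x⌋₊ + 1) := by
  have hbx : b ^ Real.logb b x = x := Real.rpow_logb (by positivity) hb.ne' (by positivity)
  constructor
  · calc b ^ ⌊Real.logb b x⌋₊ = b ^ (⌊Real.logb b x⌋₊ : ℝ) := (Real.rpow_natCast b _).symm
      _ ≤ b ^ Real.logb b x :=
        Real.rpow_le_rpow_of_exponent_le hb.le (Nat.floor_le (Real.logb_nonneg hb hx))
      _ = x := hbx
  · calc x = b ^ Real.logb b x := hbx.symm
      _ < b ^ ((⌊Real.logb b x⌋₊ + 1 : ℕ) : ℝ) :=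
        Real.rpow_lt_rpow_of_exponent_lt hb (by push_cast; exact Nat.lt_floor_add_one _)
      _ = _ := Real.rpow_natCast _ _

theorem tendsto_clog_pow_div {m n : ℕ} (hm : 1 < m) (hn : 0 < n) :
    Tendsto (fun l : ℕ => (Nat.clog m (n ^ l) : ℝ) / l) atTop
      (nhds (Real.log n / Real.log m)) := by
  have hlogm : 0 < Real.log m := Real.log_pos (by exact_mod_cast hm)
  have hn₀ : (0 : ℝ) < n := by exact_mod_cast hn
  refine tendsto_of_tendsto_of_tendsto_of_le_of_le' tendsto_const_nhds
    (by simpa using tendsto_const_nhds.add (tendsto_one_div_atTop_nhds_zero_nat (𝕜 := ℝ)))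
    ((eventually_ge_atTop 1).mono fun l hl => ?_) ((eventually_ge_atTop 1).mono fun l hl => ?_)
  · have hle : ((n : ℝ) ^ l) ≤ (m : ℝ) ^ Nat.clog m (n ^ l) := by
      exact_mod_cast Nat.le_pow_clog hm _
    have := Real.log_le_log (by positivity) hle
    rw [Real.log_pow, Real.log_pow] at this
    rw [div_le_div_iff₀ hlogm (by exact_mod_cast hl)]
    linarith
  · have hle : (m : ℝ) ^ Nat.clog m (n ^ l) ≤ m * (n : ℝ) ^ l := by
      exact_mod_cast Nat.pow_clog_le_mul (zero_lt_one.trans hm) (pow_pos hn l)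
    have := Real.log_le_log (by positivity) hle
    rw [Real.log_mul (by positivity) (by positivity), Real.log_pow, Real.log_pow] at this
    have hl₀ : (0 : ℝ) < l := by exact_mod_cast hl
    rw [div_le_iff₀ hl₀, add_mul, inv_mul_cancel₀ hl₀.ne', div_mul_eq_mul_div,
      div_add_one hlogm.ne', le_div_iff₀ hlogm]
    linarith

namespace BedfordMcMullen

def CoverableBy (E : Set (ℝ × ℝ)) (r : ℝ) (k : ℕ) : Prop :=
  ∃ U : Fin k → Set (ℝ × ℝ), (∀ i, Metric.ediam (U i) ≤ ENNReal.ofReal r) ∧ E ⊆ ⋃ i, U i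

section CoverNumber

variable {E : Set (ℝ × ℝ)} {r : ℝ}

theorem coverNumber_le {k : ℕ} (h : CoverableBy E r k) : coverNumber E r ≤ k :=
  Nat.sInf_le h

theorem CoverableBy.coverNumber {k : ℕ} (h : CoverableBy E r k) :
    CoverableBy E r (coverNumber E r) :=
  Nat.sInf_mem (s := {k | CoverableBy E r k}) ⟨k, h⟩

theorem CoverableBy.mono {k : ℕ} {r' : ℝ} (h : CoverableBy E r k) (hr : r ≤ r') :
    CoverableBy E r' k :=
  let ⟨U, hU, hEU⟩ := h
  ⟨U, fun i => (hU i).trans (ENNReal.ofReal_le_ofReal hr), hEU⟩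

theorem coverableBy_card {ι : Type*} (S : Finset ι) (V : ι → Set (ℝ × ℝ))
    (hV : ∀ i ∈ S, Metric.ediam (V i) ≤ ENNReal.ofReal r) (hEV : E ⊆ ⋃ i ∈ S, V i) :
    CoverableBy E r S.card := by
  refine ⟨fun j => V (S.equivFin.symm j), fun j => hV _ (S.equivFin.symm j).2, ?_⟩
  intro x hx
  obtain ⟨i, hi, hxi⟩ := mem_iUnion₂.mp (hEV hx)
  exact mem_iUnion.mpr ⟨S.equivFin ⟨i, hi⟩, by simpa using hxi⟩

theorem _root_.IsCompact.coverableBy (hE : IsCompact E) (hr : 0 < r) :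
    CoverableBy E r (coverNumber E r) := by
  obtain ⟨t, -, ht, hEt⟩ := finite_cover_balls_of_compact hE (half_pos hr)
  refine (coverableBy_card ht.toFinset (fun x => Metric.ball x (r / 2)) (fun x _ => ?_)
    (by simpa using hEt)).coverNumber
  refine Metric.ediam_le fun y hy z hz => (edist_le_ofReal hr.le).mpr ?_
  linarith [dist_triangle_right y z x, Metric.mem_ball.mp hy, Metric.mem_ball.mp hz]

theorem _root_.IsCompact.coverNumber_antitoneOn (hE : IsCompact E) :
    AntitoneOn (coverNumber E) (Ioi 0) := fun _ hr _ _ hrr' =>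
  coverNumber_le ((hE.coverableBy hr).mono hrr')

open scoped Classical in
theorem card_le_coverNumber_mul (hE : IsCompact E) (hr : 0 < r) {ι : Type*} (S : Finset ι)
    (Q : ι → ℝ × ℝ) (hQ : ∀ i ∈ S, Q i ∈ E) {K : ℕ}
    (hK : ∀ U : Set (ℝ × ℝ), Metric.ediam U ≤ ENNReal.ofReal r →
      (S.filter fun i => Q i ∈ U).card ≤ K) :
    S.card ≤ coverNumber E r * K := by
  obtain ⟨U, hU, hEU⟩ := hE.coverableBy hr
  have hS : S ⊆ Finset.univ.biUnion fun j => S.filter fun i => Q i ∈ U j := by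
    intro i hi
    obtain ⟨j, hj⟩ := mem_iUnion.mp (hEU (hQ i hi))
    exact Finset.mem_biUnion.mpr ⟨j, Finset.mem_univ j, Finset.mem_filter.mpr ⟨hi, hj⟩⟩
  calc S.card ≤ ∑ j, (S.filter fun i => Q i ∈ U j).card :=
        (Finset.card_le_card hS).trans Finset.card_biUnion_le
    _ ≤ ∑ _j : Fin (coverNumber E r), K := Finset.sum_le_sum fun j _ => hK _ (hU j)
    _ = coverNumber E r * K := by simp

end CoverNumber

def gridBox (w h : ℝ) (c : ℕ × ℕ) : Set (ℝ × ℝ) :=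
  Icc (c.1 * w) ((c.1 + 1) * w) ×ˢ Icc (c.2 * h) ((c.2 + 1) * h)

theorem ediam_gridBox_le {w h : ℝ} (hw : 0 ≤ w) (c : ℕ × ℕ) :
    Metric.ediam (gridBox w h c) ≤ ENNReal.ofReal (max w h) := by
  refine Metric.ediam_le fun x hx y hy => (edist_le_ofReal (le_max_of_le_left hw)).mpr ?_
  rw [Prod.dist_eq]
  apply max_le_max
  · exact (Real.dist_le_of_mem_Icc hx.1 hy.1).trans_eq (by ring)
  · exact (Real.dist_le_of_mem_Icc hx.2 hy.2).trans_eq (by ring)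

theorem le_add_of_mem_Icc_of_dist_le {w x y : ℝ} {a b p : ℕ} (hw : 0 < w)
    (hx : x ∈ Icc (a * w) ((a + 1) * w)) (hy : y ∈ Icc (b * w) ((b + 1) * w))
    (hxy : dist x y ≤ p * w) : a ≤ b + p + 1 := by
  have : (a : ℝ) * w ≤ (b + p + 1) * w := by
    linarith [hx.1, hy.2, (abs_le.mp (Real.dist_eq x y ▸ hxy)).2]
  exact_mod_cast le_of_mul_le_mul_right this hw

open scoped Classical in
theorem card_filter_mem_le_of_mem_gridBox {w h r : ℝ} {p q : ℕ} (hw : 0 < w) (hh : 0 < h)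
    (hrw : r ≤ p * w) (hrh : r ≤ q * h) (S : Finset (ℕ × ℕ)) (Q : ℕ × ℕ → ℝ × ℝ)
    (hQ : ∀ c ∈ S, Q c ∈ gridBox w h c) (U : Set (ℝ × ℝ)) (hU : Metric.ediam U ≤ ENNReal.ofReal r) :
    (S.filter fun c => Q c ∈ U).card ≤ (2 * p + 3) * (2 * q + 3) := by
  rcases (S.filter fun c => Q c ∈ U).eq_empty_or_nonempty with hempty | ⟨c₀, hc₀⟩
  · simp [hempty]
  have hwin : ∀ c ∈ S.filter fun c => Q c ∈ U, ∀ c' ∈ S.filter fun c => Q c ∈ U,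
      c.1 ≤ c'.1 + p + 1 ∧ c.2 ≤ c'.2 + q + 1 := by
    intro c hc c' hc'
    rw [Finset.mem_filter] at hc hc'
    have hdist (s : ℝ) (hs : r ≤ s) (hs0 : 0 ≤ s) : dist (Q c) (Q c') ≤ s :=
      (edist_le_ofReal hs0).mp <| (Metric.edist_le_ediam_of_mem hc.2 hc'.2).trans <|
        hU.trans (ENNReal.ofReal_le_ofReal hs)
    simp only [Prod.dist_eq, max_le_iff] at hdist
    exact ⟨le_add_of_mem_Icc_of_dist_le hw (hQ c hc.1).1 (hQ c' hc'.1).1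
        (hdist _ hrw (by positivity)).1,
      le_add_of_mem_Icc_of_dist_le hh (hQ c hc.1).2 (hQ c' hc'.1).2
        (hdist _ hrh (by positivity)).2⟩
  calc (S.filter fun c => Q c ∈ U).card
      ≤ (Finset.Icc (c₀.1 - (p + 1)) (c₀.1 + p + 1) ×ˢ
          Finset.Icc (c₀.2 - (q + 1)) (c₀.2 + q + 1)).card := by
        refine Finset.card_le_card fun c hc => ?_
        have h₁ := hwin c hc c₀ hc₀
        have h₂ := hwin c₀ hc₀ c hc
        simp only [Finset.mem_product, Finset.mem_Icc]
        omega
    _ ≤ (2 * p + 3) * (2 * q + 3) := by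
        rw [Finset.card_product, Nat.card_Icc, Nat.card_Icc]
        gcongr <;> omega

theorem eq_and_eq_of_mul_add_eq_mul_add {m a a' d d' : ℕ} (hd : d < m) (hd' : d' < m)
    (h : m * a + d = m * a' + d') : a = a' ∧ d = d' := by
  have hm : 0 < m := by omega
  have hdiv := congrArg (· / m) h
  have hmod := congrArg (· % m) h
  simp only [Nat.mul_add_div hm, Nat.div_eq_of_lt hd, Nat.div_eq_of_lt hd', Nat.mul_add_mod,
    Nat.mod_eq_of_lt hd, Nat.mod_eq_of_lt hd'] at hdiv hmod
  exact ⟨by simpa using hdiv, hmod⟩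

section Codes

variable (m n : ℕ) (D : Finset (ℕ × ℕ))

/-- The integer translates of the level-`l` cylinders: the word `d₁ ⋯ d_l` has code
`(∑ dᵢ.1 m^(l-i), ∑ dᵢ.2 n^(l-i))`, and its cylinder is `bmMap (m ^ l) (n ^ l) code '' F`. -/
def codes : ℕ → Finset (ℕ × ℕ)
  | 0 => {(0, 0)}
  | l + 1 => (codes l ×ˢ D).image fun x => (m * x.1.1 + x.2.1, n * x.1.2 + x.2.2)

variable {m n D}

theorem codes_lt (hD : ∀ d ∈ D, d.1 < m ∧ d.2 < n) :
    ∀ {l : ℕ}, ∀ c ∈ codes m n D l, c.1 < m ^ l ∧ c.2 < n ^ l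
  | 0, c, hc => by simp_all [codes]
  | l + 1, c, hc => by
    obtain ⟨⟨a, d⟩, had, rfl⟩ := Finset.mem_image.mp hc
    obtain ⟨ha, hd⟩ := Finset.mem_product.mp had
    obtain ⟨ha₁, ha₂⟩ := codes_lt hD a ha
    obtain ⟨hd₁, hd₂⟩ := hD d hd
    constructor <;> rw [pow_succ'] <;> nlinarith

theorem card_codes (hD : ∀ d ∈ D, d.1 < m ∧ d.2 < n) :
    ∀ l : ℕ, (codes m n D l).card = D.card ^ l
  | 0 => rfl
  | l + 1 => by
    rw [codes, Finset.card_image_of_injOn, Finset.card_product, card_codes hD l, pow_succ]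
    rintro ⟨a, d⟩ had ⟨a', d'⟩ had' h
    simp only [Finset.coe_product, mem_prod, Finset.mem_coe] at had had'
    simp only [Prod.mk.injEq] at h
    obtain ⟨h₁, h₁'⟩ := eq_and_eq_of_mul_add_eq_mul_add (hD d had.2).1 (hD d' had'.2).1 h.1
    obtain ⟨h₂, h₂'⟩ := eq_and_eq_of_mul_add_eq_mul_add (hD d had.2).2 (hD d' had'.2).2 h.2
    simp [Prod.ext h₁ h₂, Prod.ext h₁' h₂']

theorem bmMap_pow_comp_bmMap (hm : m ≠ 0) (hn : n ≠ 0) (l : ℕ) (c d : ℕ × ℕ) :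
    bmMap (m ^ l) (n ^ l) c ∘ bmMap m n d =
      bmMap (m ^ (l + 1)) (n ^ (l + 1)) (m * c.1 + d.1, n * c.2 + d.2) := by
  funext p
  simp only [Function.comp, bmMap, Prod.mk.injEq]
  push_cast
  constructor <;> field_simp <;> ring

theorem eq_biUnion_codes {F : Set (ℝ × ℝ)} (hm : m ≠ 0) (hn : n ≠ 0)
    (hF : F = ⋃ d ∈ D, bmMap m n d '' F) :
    ∀ l : ℕ, F = ⋃ c ∈ codes m n D l, bmMap (m ^ l) (n ^ l) c '' F
  | 0 => by ext p; simp [codes, bmMap]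
  | l + 1 => calc
      F = ⋃ c ∈ codes m n D l, bmMap (m ^ l) (n ^ l) c '' ⋃ d ∈ D, bmMap m n d '' F := by
        rw [← hF]; exact eq_biUnion_codes hm hn hF l
      _ = ⋃ x ∈ codes m n D l ×ˢ D, (bmMap (m ^ l) (n ^ l) x.1 ∘ bmMap m n x.2) '' F := by
        ext p
        simp only [image_iUnion₂, image_comp, mem_iUnion, Finset.mem_product, exists_prop]
        exact ⟨fun ⟨c, hc, d, hd, hp⟩ => ⟨(c, d), ⟨hc, hd⟩, hp⟩,
          fun ⟨x, ⟨hc, hd⟩, hp⟩ => ⟨x.1, hc, x.2, hd, hp⟩⟩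
      _ = ⋃ c ∈ codes m n D (l + 1), bmMap (m ^ (l + 1)) (n ^ (l + 1)) c '' F := by
        simp only [bmMap_pow_comp_bmMap hm hn, codes, Finset.set_biUnion_finset_image]

end Codes

variable {m n : ℕ} {D : Finset (ℕ × ℕ)}

def colDigits (D : Finset (ℕ × ℕ)) : Finset (ℕ × ℕ) := (cols D).image fun a => (a, 0)

theorem colDigits_lt (hD : ∀ d ∈ D, d.1 < m ∧ d.2 < n) :
    ∀ a ∈ colDigits D, a.1 < m ∧ a.2 < 1 := by
  simp only [colDigits, cols, Finset.mem_image]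
  rintro _ ⟨_, ⟨d, hd, rfl⟩, rfl⟩
  exact ⟨(hD d hd).1, Nat.one_pos⟩

theorem card_colDigits (D : Finset (ℕ × ℕ)) : (colDigits D).card = (cols D).card :=
  Finset.card_image_of_injective _ fun _ _ h => (Prod.mk.inj h).1

/-- Vertical base `1` makes these maps fix the `y`-coordinate, and (by `codes_lt`) forces every
code of `colDigits D` to have second coordinate `0`. -/
theorem image_fst_eq_biUnion {F : Set (ℝ × ℝ)} (hF : F = ⋃ d ∈ D, bmMap m n d '' F) :
    (fun p => (p.1, 0)) '' F =
      ⋃ a ∈ colDigits D, bmMap m 1 a '' ((fun p => (p.1, 0)) '' F) := calc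
  (fun p => (p.1, 0)) '' F = (fun p => (p.1, 0)) '' ⋃ d ∈ D, bmMap m n d '' F := by rw [← hF]
  _ = ⋃ d ∈ D, bmMap m 1 (d.1, 0) '' ((fun p => (p.1, 0)) '' F) := by
    simp [image_iUnion₂, image_image, bmMap]
  _ = _ := by simp only [colDigits, cols, Finset.set_biUnion_finset_image]

/-- Codes of the approximate squares in the `m^-(l+j) × n^-l` grid: `l` digits of `D`
followed by `j` further column digits. -/
def approxSquares (m n : ℕ) (D : Finset (ℕ × ℕ)) (l j : ℕ) : Finset (ℕ × ℕ) :=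
  (codes m n D l ×ˢ codes m 1 (colDigits D) j).image fun x => (m ^ j * x.1.1 + x.2.1, x.1.2)

theorem card_approxSquares (hD : ∀ d ∈ D, d.1 < m ∧ d.2 < n) (l j : ℕ) :
    (approxSquares m n D l j).card = D.card ^ l * (cols D).card ^ j := by
  rw [approxSquares, Finset.card_image_of_injOn, Finset.card_product, card_codes hD,
    card_codes (colDigits_lt hD), card_colDigits]
  rintro ⟨c, a⟩ hca ⟨c', a'⟩ hca' h
  simp only [Finset.coe_product, mem_prod, Finset.mem_coe] at hca hca'
  simp only [Prod.mk.injEq] at h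
  have ha := codes_lt (colDigits_lt hD) a hca.2
  have ha' := codes_lt (colDigits_lt hD) a' hca'.2
  obtain ⟨h₁, h₂⟩ := eq_and_eq_of_mul_add_eq_mul_add ha.1 ha'.1 h.1
  simp only [one_pow, Nat.lt_one_iff] at ha ha'
  simp [Prod.ext h₁ h.2, Prod.ext h₂ (ha.2.trans ha'.2.symm)]

theorem add_div_mem_Icc {t N : ℝ} (ht : t ∈ Icc 0 1) (hN : 0 < N) (a : ℝ) :
    (t + a) / N ∈ Icc (a * N⁻¹) ((a + 1) * N⁻¹) := by
  simp only [← div_eq_mul_inv]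
  exact ⟨div_le_div_of_nonneg_right (by linarith [ht.1]) hN.le,
    div_le_div_of_nonneg_right (by linarith [ht.2]) hN.le⟩

theorem bmMap_mem_gridBox (hm : 0 < m) (hn : 0 < n) {l j : ℕ} (c a : ℕ × ℕ) {q : ℝ × ℝ} {t : ℝ}
    (ht : t ∈ Icc 0 1) (hq : q.1 = (t + a.1) / (m : ℝ) ^ j) (hq₂ : q.2 ∈ Icc 0 1) :
    bmMap (m ^ l) (n ^ l) c q ∈
      gridBox ((m : ℝ) ^ (l + j))⁻¹ ((n : ℝ) ^ l)⁻¹ (m ^ j * c.1 + a.1, c.2) := by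
  have hx : (q.1 + c.1) / (m : ℝ) ^ l = (t + ↑(m ^ j * c.1 + a.1)) / (m : ℝ) ^ (l + j) := by
    rw [hq]; push_cast; field_simp; ring
  simp only [gridBox, bmMap, Nat.cast_pow, hx]
  exact ⟨add_div_mem_Icc ht (by positivity) _, add_div_mem_Icc hq₂ (by positivity) _⟩

theorem subset_Icc_zero_one_of_forall_eq_add_div {K : Set ℝ} (hK : IsCompact K) {c : ℕ}
    (hc : 1 < c) (h : ∀ x ∈ K, ∃ y ∈ K, ∃ a : ℕ, a < c ∧ x = (y + a) / c) :
    K ⊆ Icc 0 1 := by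
  rcases K.eq_empty_or_nonempty with rfl | hne
  · exact empty_subset _
  have hc₀ : (1 : ℝ) < c := by exact_mod_cast hc
  obtain ⟨s, hsK, hs⟩ := hK.exists_isGreatest hne
  obtain ⟨i, hiK, hi⟩ := hK.exists_isLeast hne
  have hs₁ : s ≤ 1 := by
    obtain ⟨y, hy, a, ha, hsy⟩ := h s hsK
    have ha' : (a : ℝ) + 1 ≤ c := by exact_mod_cast ha
    rw [eq_div_iff (by positivity)] at hsy
    nlinarith [hs hy]
  have hi₀ : 0 ≤ i := by
    obtain ⟨y, hy, a, -, hiy⟩ := h i hiK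
    rw [eq_div_iff (by positivity)] at hiy
    nlinarith [hi hy, (Nat.cast_nonneg a : (0 : ℝ) ≤ a)]
  exact fun x hx => ⟨hi₀.trans (hi hx), (hs hx).trans hs₁⟩

theorem log_div_neg_log_mem_Icc {r b : ℝ} {l ν p p' C : ℕ} (hr : 0 < r) (hb : 1 < b) (hl : 1 ≤ l)
    (hle : b ^ l ≤ r⁻¹) (hlt : r⁻¹ ≤ b ^ (l + 1)) (hp : 0 < p) (hpν : p ≤ ν * C) (hνp' : ν ≤ p') :
    Real.log ν / -Real.log r ∈
      Icc ((Real.log p - Real.log C) / ((l + 1) * Real.log b))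
        (Real.log p' / (l * Real.log b)) := by
  have hlogb : 0 < Real.log b := Real.log_pos hb
  have hν : 0 < ν := Nat.pos_of_mul_pos_right (hp.trans_le hpν)
  have hC : 0 < C := Nat.pos_of_mul_pos_left (hp.trans_le hpν)
  have hlogr₁ : l * Real.log b ≤ -Real.log r := by
    rw [← Real.log_inv, ← Real.log_pow]
    exact Real.log_le_log (by positivity) hle
  have hlogr₂ : -Real.log r ≤ (l + 1) * Real.log b := by
    rw [← Real.log_inv, ← Nat.cast_add_one, ← Real.log_pow]
    exact Real.log_le_log (by positivity) hlt
  have hlogν₁ : Real.log p - Real.log C ≤ Real.log ν := by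
    rw [sub_le_iff_le_add, ← Real.log_mul (by positivity) (by positivity)]
    exact Real.log_le_log (by positivity) (by exact_mod_cast hpν)
  have hlogν₂ : Real.log ν ≤ Real.log p' :=
    Real.log_le_log (by positivity) (by exact_mod_cast hνp')
  have hl₀ : (0 : ℝ) < l := by exact_mod_cast hl
  constructor
  · calc (Real.log p - Real.log C) / ((l + 1) * Real.log b)
        ≤ Real.log ν / ((l + 1) * Real.log b) := by gcongr
      _ ≤ Real.log ν / -Real.log r :=
        div_le_div_of_nonneg_left (Real.log_natCast_nonneg ν)
          (lt_of_lt_of_le (by positivity) hlogr₁) hlogr₂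
  · calc Real.log ν / -Real.log r ≤ Real.log ν / (l * Real.log b) :=
        div_le_div_of_nonneg_left (Real.log_natCast_nonneg ν) (by positivity) hlogr₁
      _ ≤ Real.log p' / (l * Real.log b) := by gcongr

theorem tendsto_sub_div_add_one_mul {u : ℕ → ℝ} {σ : ℝ}
    (hu : Tendsto (fun l : ℕ => u l / l) atTop (nhds σ)) (c : ℝ) {L : ℝ} (hL : L ≠ 0) :
    Tendsto (fun l : ℕ => (u l - c) / ((l + 1) * L)) atTop (nhds (σ / L)) := by
  have := ((hu.mul (tendsto_natCast_div_add_atTop (1 : ℝ))).sub ((tendsto_const_nhds (x := c)).mul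
    (tendsto_one_div_add_atTop_nhds_zero_nat (𝕜 := ℝ)))).div_const L
  rw [mul_one, mul_zero, sub_zero] at this
  refine this.congr' ((eventually_ge_atTop 1).mono fun l hl => ?_)
  have : (0 : ℝ) < l := by exact_mod_cast hl
  field_simp

theorem tendsto_add_one_div_mul {u : ℕ → ℝ} {σ : ℝ}
    (hu : Tendsto (fun l : ℕ => u l / l) atTop (nhds σ)) {L : ℝ} (hL : L ≠ 0) :
    Tendsto (fun l : ℕ => u (l + 1) / (l * L)) atTop (nhds (σ / L)) := by
  have := ((hu.comp (tendsto_add_atTop_nat 1)).mul ((tendsto_const_nhds (x := (1 : ℝ))).add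
    (tendsto_one_div_atTop_nhds_zero_nat (𝕜 := ℝ)))).div_const L
  rw [add_zero, mul_one] at this
  refine this.congr' ((eventually_ge_atTop 1).mono fun l hl => ?_)
  have : (0 : ℝ) < l := by exact_mod_cast hl
  simp only [Function.comp, Nat.cast_add_one]
  field_simp

theorem tendsto_log_div_neg_log_of_pow_scales {N : ℝ → ℕ} {P : ℕ → ℕ} {b : ℝ} {C : ℕ} {σ : ℝ}
    (hb : 1 < b) (hN : AntitoneOn N (Ioi 0)) (hP : ∀ l, 0 < P l)
    (hup : ∀ l, N (b ^ l)⁻¹ ≤ P l) (hlow : ∀ l, P l ≤ N (b ^ l)⁻¹ * C)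
    (hσ : Tendsto (fun l : ℕ => Real.log (P l) / l) atTop (nhds σ)) :
    Tendsto (fun r => Real.log (N r) / -Real.log r) (nhdsWithin 0 (Ioi 0))
      (nhds (σ / Real.log b)) := by
  have hlogb : 0 < Real.log b := Real.log_pos hb
  have hlower := tendsto_sub_div_add_one_mul hσ (Real.log C) hlogb.ne'
  have hupper := tendsto_add_one_div_mul hσ hlogb.ne'
  have hL : Tendsto (fun r : ℝ => ⌊Real.logb b r⁻¹⌋₊) (nhdsWithin 0 (Ioi 0)) atTop :=
    tendsto_nat_floor_atTop.comp ((Real.tendsto_logb_atTop hb).comp tendsto_inv_nhdsGT_zero)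
  have hsmall : Ioo 0 b⁻¹ ∈ nhdsWithin (0 : ℝ) (Ioi 0) :=
    Ioo_mem_nhdsGT (inv_pos.mpr (zero_lt_one.trans hb))
  have hsandwich : ∀ r ∈ Ioo 0 b⁻¹, Real.log (N r) / -Real.log r ∈
      Icc ((Real.log (P ⌊Real.logb b r⁻¹⌋₊) - Real.log C) /
          ((⌊Real.logb b r⁻¹⌋₊ + 1) * Real.log b))
        (Real.log (P (⌊Real.logb b r⁻¹⌋₊ + 1)) / (⌊Real.logb b r⁻¹⌋₊ * Real.log b)) := by
    rintro r ⟨hr, hrb⟩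
    have hbr : b < r⁻¹ := (lt_inv_comm₀ hr (by positivity)).mp hrb
    obtain ⟨hle, hlt⟩ := Real.pow_floor_logb_le_and_lt_pow_succ hb (by linarith)
    have hl : 1 ≤ ⌊Real.logb b r⁻¹⌋₊ := by
      by_contra! h0
      rw [Nat.lt_one_iff.mp h0, zero_add, pow_one] at hlt
      linarith
    refine log_div_neg_log_mem_Icc hr hb hl hle hlt.le (hP _)
      ((hlow _).trans (Nat.mul_le_mul_right _ ?_)) ((hN ?_ hr ?_).trans (hup _))
    · exact hN hr (by simp only [mem_Ioi]; positivity) ((le_inv_comm₀ hr (by positivity)).mpr hle)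
    · simp only [mem_Ioi]; positivity
    · exact (inv_le_comm₀ (by positivity) hr).mpr hlt.le
  exact tendsto_of_tendsto_of_tendsto_of_le_of_le' (hlower.comp hL) (hupper.comp hL)
    (eventually_of_mem hsmall fun r hr => (hsandwich r hr).1)
    (eventually_of_mem hsmall fun r hr => (hsandwich r hr).2)

end BedfordMcMullen

namespace IsBMCarpet

open BedfordMcMullen

variable {m n : ℕ} {D : Finset (ℕ × ℕ)} {F : Set (ℝ × ℝ)}

theorem one_lt_n (hF : IsBMCarpet m n D F) : 1 < n :=
  hF.one_lt_m.trans hF.m_lt_n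

theorem m_pos (hF : IsBMCarpet m n D F) : 0 < m :=
  zero_lt_one.trans hF.one_lt_m

theorem n_pos (hF : IsBMCarpet m n D F) : 0 < n :=
  zero_lt_one.trans hF.one_lt_n

theorem card_pos (hF : IsBMCarpet m n D F) : 0 < D.card :=
  Finset.card_pos.mpr hF.D_nonempty

theorem card_cols_pos (hF : IsBMCarpet m n D F) : 0 < (cols D).card :=
  Finset.card_pos.mpr (hF.D_nonempty.image _)

theorem subset_Icc (hF : IsBMCarpet m n D F) : F ⊆ Icc 0 1 ×ˢ Icc 0 1 := by
  have hdigit : ∀ p ∈ F, ∃ d ∈ D, ∃ q ∈ F, p = bmMap m n d q := fun p hp => by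
    rw [hF.self_affine] at hp
    obtain ⟨d, hd, q, hq, rfl⟩ := by simpa only [mem_iUnion₂, mem_image] using hp
    exact ⟨d, hd, q, hq, rfl⟩
  have h₁ : Prod.fst '' F ⊆ Icc 0 1 := by
    refine subset_Icc_zero_one_of_forall_eq_add_div (hF.F_compact.image continuous_fst)
      hF.one_lt_m ?_
    rintro _ ⟨p, hp, rfl⟩
    obtain ⟨d, hd, q, hq, rfl⟩ := hdigit p hp
    exact ⟨q.1, mem_image_of_mem _ hq, d.1, (hF.D_sub d hd).1, rfl⟩
  have h₂ : Prod.snd '' F ⊆ Icc 0 1 := by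
    refine subset_Icc_zero_one_of_forall_eq_add_div (hF.F_compact.image continuous_snd)
      hF.one_lt_n ?_
    rintro _ ⟨p, hp, rfl⟩
    obtain ⟨d, hd, q, hq, rfl⟩ := hdigit p hp
    exact ⟨q.2, mem_image_of_mem _ hq, d.2, (hF.D_sub d hd).2, rfl⟩
  exact fun p hp => ⟨h₁ (mem_image_of_mem _ hp), h₂ (mem_image_of_mem _ hp)⟩

theorem exists_eq_bmMap_codes (hF : IsBMCarpet m n D F) (l : ℕ) {p : ℝ × ℝ} (hp : p ∈ F) :
    ∃ c ∈ codes m n D l, ∃ q ∈ F, bmMap (m ^ l) (n ^ l) c q = p := by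
  rw [eq_biUnion_codes hF.m_pos.ne' hF.n_pos.ne' hF.self_affine l] at hp
  simpa only [mem_iUnion₂, mem_image, exists_prop] using hp

theorem bmMap_codes_mem (hF : IsBMCarpet m n D F) {l : ℕ} {c : ℕ × ℕ}
    (hc : c ∈ codes m n D l) {q : ℝ × ℝ} (hq : q ∈ F) : bmMap (m ^ l) (n ^ l) c q ∈ F := by
  rw [eq_biUnion_codes hF.m_pos.ne' hF.n_pos.ne' hF.self_affine l]
  exact mem_biUnion hc (mem_image_of_mem _ hq)

theorem image_fst_eq_biUnion_codes (hF : IsBMCarpet m n D F) (j : ℕ) :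
    (fun p => (p.1, 0)) '' F =
      ⋃ a ∈ codes m 1 (colDigits D) j, bmMap (m ^ j) (1 ^ j) a '' ((fun p => (p.1, 0)) '' F) :=
  eq_biUnion_codes hF.m_pos.ne' one_ne_zero
    (image_fst_eq_biUnion hF.self_affine) j

theorem subset_biUnion_gridBox (hF : IsBMCarpet m n D F) (l j : ℕ) :
    F ⊆ ⋃ c ∈ approxSquares m n D l j, gridBox ((m : ℝ) ^ (l + j))⁻¹ ((n : ℝ) ^ l)⁻¹ c := by
  intro p hp
  obtain ⟨c, hc, q, hq, rfl⟩ := hF.exists_eq_bmMap_codes l hp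
  have hq' : (q.1, (0 : ℝ)) ∈ (fun p => (p.1, 0)) '' F := mem_image_of_mem _ hq
  rw [hF.image_fst_eq_biUnion_codes j] at hq'
  obtain ⟨a, ha, _, ⟨t, ht, rfl⟩, htq⟩ := by
    simpa only [mem_iUnion₂, mem_image, exists_prop] using hq'
  have hq₁ : q.1 = (t.1 + a.1) / (m : ℝ) ^ j := by
    simpa [bmMap] using (congrArg Prod.fst htq).symm
  refine mem_biUnion (Finset.mem_image_of_mem _ (Finset.mem_product.mpr ⟨hc, ha⟩ :
    (c, a) ∈ codes m n D l ×ˢ codes m 1 (colDigits D) j)) ?_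
  exact bmMap_mem_gridBox hF.m_pos hF.n_pos c a
    (hF.subset_Icc ht).1 hq₁ (hF.subset_Icc hq).2

theorem gridBox_inter_nonempty (hF : IsBMCarpet m n D F) {l j : ℕ} {c : ℕ × ℕ}
    (hc : c ∈ approxSquares m n D l j) :
    (gridBox ((m : ℝ) ^ (l + j))⁻¹ ((n : ℝ) ^ l)⁻¹ c ∩ F).Nonempty := by
  obtain ⟨⟨c, a⟩, hca, rfl⟩ := Finset.mem_image.mp hc
  obtain ⟨hc, ha⟩ := Finset.mem_product.mp hca
  obtain ⟨t, ht⟩ := hF.F_nonempty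
  have hta : bmMap (m ^ j) (1 ^ j) a (t.1, 0) ∈ (fun p => (p.1, 0)) '' F := by
    rw [hF.image_fst_eq_biUnion_codes j]
    exact mem_biUnion ha (mem_image_of_mem _ (mem_image_of_mem _ ht))
  obtain ⟨q, hq, hqa⟩ := hta
  have hq₁ : q.1 = (t.1 + a.1) / (m : ℝ) ^ j := by
    simpa [bmMap] using congrArg Prod.fst hqa
  exact ⟨_, bmMap_mem_gridBox hF.m_pos hF.n_pos c a
    (hF.subset_Icc ht).1 hq₁ (hF.subset_Icc hq).2, hF.bmMap_codes_mem hc hq⟩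

theorem le_clog (hF : IsBMCarpet m n D F) (l : ℕ) : l ≤ Nat.clog m (n ^ l) :=
  (Nat.pow_le_pow_iff_right hF.one_lt_m).mp <|
    (Nat.pow_le_pow_left hF.m_lt_n.le l).trans (Nat.le_pow_clog hF.one_lt_m _)

theorem coverNumber_inv_pow_le (hF : IsBMCarpet m n D F) (l : ℕ) :
    coverNumber F ((n : ℝ) ^ l)⁻¹ ≤
      D.card ^ l * (cols D).card ^ (Nat.clog m (n ^ l) - l) := by
  have hk : (n : ℝ) ^ l ≤ (m : ℝ) ^ (l + (Nat.clog m (n ^ l) - l)) := by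
    rw [Nat.add_sub_cancel' (hF.le_clog l)]
    exact_mod_cast Nat.le_pow_clog hF.one_lt_m _
  have hn : (0 : ℝ) < n := by exact_mod_cast hF.n_pos
  rw [← card_approxSquares hF.D_sub]
  refine BedfordMcMullen.coverNumber_le (coverableBy_card _ _ (fun c _ => ?_)
    (hF.subset_biUnion_gridBox _ _))
  refine (ediam_gridBox_le (by positivity) c).trans (ENNReal.ofReal_le_ofReal ?_)
  exact max_le (inv_anti₀ (by positivity) hk) le_rfl

theorem le_coverNumber_inv_pow_mul (hF : IsBMCarpet m n D F) (l : ℕ) :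
    D.card ^ l * (cols D).card ^ (Nat.clog m (n ^ l) - l) ≤
      coverNumber F ((n : ℝ) ^ l)⁻¹ * ((2 * m + 3) * 5) := by
  have hn : (0 : ℝ) < n := by exact_mod_cast hF.n_pos
  set k := Nat.clog m (n ^ l)
  have hkl : l + (k - l) = k := Nat.add_sub_cancel' (hF.le_clog l)
  have hm : (0 : ℝ) < m := by exact_mod_cast hF.m_pos
  have hrw : ((n : ℝ) ^ l)⁻¹ ≤ m * ((m : ℝ) ^ (l + (k - l)))⁻¹ := calc
    ((n : ℝ) ^ l)⁻¹ = m * (m * (n : ℝ) ^ l)⁻¹ := by field_simp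
    _ ≤ m * ((m : ℝ) ^ (l + (k - l)))⁻¹ := by
      rw [hkl]
      gcongr
      exact_mod_cast Nat.pow_clog_le_mul hF.m_pos (pow_pos hF.n_pos l)
  have hrh : ((n : ℝ) ^ l)⁻¹ ≤ (1 : ℕ) * ((n : ℝ) ^ l)⁻¹ := by simp
  have hmeets := fun c (hc : c ∈ approxSquares m n D l (k - l)) => hF.gridBox_inter_nonempty hc
  choose! Q hQ using hmeets
  rw [← card_approxSquares hF.D_sub]
  exact BedfordMcMullen.card_le_coverNumber_mul hF.F_compact (by positivity) _ Q
    (fun c hc => (hQ c hc).2) fun U hU =>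
      card_filter_mem_le_of_mem_gridBox (by positivity) (by positivity) hrw hrh _ Q
        (fun c hc => (hQ c hc).1) U hU

theorem tendsto_log_card_div (hF : IsBMCarpet m n D F) :
    Tendsto (fun l : ℕ =>
        Real.log (D.card ^ l * (cols D).card ^ (Nat.clog m (n ^ l) - l) : ℕ) / l) atTop
      (nhds (Real.log D.card + (Real.log n / Real.log m - 1) * Real.log (cols D).card)) := by
  have hM := hF.card_cols_pos
  have hN := hF.card_pos
  refine (tendsto_const_nhds.add (((tendsto_clog_pow_div hF.one_lt_m hF.n_pos).sub_const 1).mul_const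
    _)).congr' ((eventually_ge_atTop 1).mono fun l hl => ?_)
  have hl₀ : (0 : ℝ) < l := by exact_mod_cast hl
  dsimp only
  rw [Nat.cast_mul, Nat.cast_pow, Nat.cast_pow, Real.log_mul (by positivity) (by positivity),
    Real.log_pow, Real.log_pow, Nat.cast_sub (hF.le_clog l)]
  field_simp

end IsBMCarpet

theorem bm_box_dimension (m n : ℕ) (D : Finset (ℕ × ℕ)) (F : Set (ℝ × ℝ))
    (hF : IsBMCarpet m n D F) :
    Tendsto (fun r : ℝ => Real.log (coverNumber F r) / (-Real.log r))
      (nhdsWithin 0 (Set.Ioi 0))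
      (nhds (Real.log ((cols D).card : ℝ) / Real.log m +
        Real.log ((D.card : ℝ) / ((cols D).card : ℝ)) / Real.log n)) := by
  have hM := hF.card_cols_pos
  have hN := hF.card_pos
  have hm : (1 : ℝ) < m := by exact_mod_cast hF.one_lt_m
  have hn : (1 : ℝ) < n := by exact_mod_cast hF.one_lt_n
  convert BedfordMcMullen.tendsto_log_div_neg_log_of_pow_scales hn
    hF.F_compact.coverNumber_antitoneOn (fun l => by positivity) hF.coverNumber_inv_pow_le
    hF.le_coverNumber_inv_pow_mul hF.tendsto_log_card_div using 2
  have := Real.log_pos hm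
  have := Real.log_pos hn
  rw [Real.log_div (by positivity) (by positivity)]
  field_simp
  ring

end
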